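/- Let ε > 0 and let W : ℝ → ℝ be a bounded measurable function with W = 0 almost everywhere on (−ε, ε). Then the Poisson integral P_W(ξ + iη) = (1/π) ∫_ℝ η/((ξ−s)² + η²) W(s) ds, which is bounded and harmonic on ℍ, extends continuously to ℍ ∪ (−ε, ε) with boundary value 0 on (−ε, ε), and extends further to a harmonic function u on the disk {w : |w| < ε} satisfying u(conj w) = −u(w); in particular, any harmonic conjugate of P_W on ℍ has a finite limit along each ray r e^{iθ}, r ↓ 0, for θ ∈ (0,π). -/

import Mathlib

open Complex Set Function Filter MeasureTheory Topology

def UHP : Set ℂ := {w : ℂ | 0 < w.im}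

/-- A real-valued function on `ℂ ≅ ℝ²` is harmonic on a set if it is `C²` there and its
Laplacian `f_xx + f_yy` vanishes at every point of the set. -/
def HarmonicOn (f : ℂ → ℝ) (s : Set ℂ) : Prop :=
  ContDiffOn ℝ 2 f s ∧
    ∀ z ∈ s, fderiv ℝ (fun w => fderiv ℝ f w 1) z 1 +
      fderiv ℝ (fun w => fderiv ℝ f w Complex.I) z Complex.I = 0

noncomputable def poissonIntegral (φ : ℝ → ℝ) (w : ℂ) : ℝ :=
  (1 / Real.pi) * ∫ s : ℝ, (w.im / ((w.re - s) ^ 2 + w.im ^ 2)) * φ s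

/-!
Replacing `W` by the a.e. equal function `V = 𝟙_{(-ε,ε)ᶜ} W` does not change `P_W`, and `V`
vanishes identically on `(-ε, ε)`. Now `π P_V` is the imaginary part of the Cauchy-type transform
`∫ V(s) ((s - w)⁻¹ - s / (s² + 1)) ds`, whose integrand is dominated by `C / (1 + s²)` locally
uniformly in `w` off the closed support of `V` on the real line. So the transform is holomorphic
on `ℂ ∖ tsupport V ⊇ ℍ ∪ B(0, ε)`, and the Poisson formula itself is the harmonic extension; it
vanishes on the real axis and is odd under conjugation by the shape of the kernel. By the open
mapping theorem a harmonic conjugate of `P_W` on `ℍ` is, up to a constant, minus the real part of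
the transform divided by `π`, which is continuous at `0`.
-/

open InnerProductSpace Laplacian ComplexConjugate

theorem InnerProductSpace.HarmonicOnNhd.harmonicOn {f : ℂ → ℝ} {s : Set ℂ}
    (h : HarmonicOnNhd f s) : HarmonicOn f s := by
  refine ⟨h.contDiffOn, fun z hz => ?_⟩
  have hd : DifferentiableAt ℝ (fderiv ℝ f) z :=
    ((h z hz).1.fderiv_right le_rfl).differentiableAt one_ne_zero
  have hΔ : Δ f z = 0 := (h z hz).2.self_of_nhds
  rw [laplacian_eq_iteratedFDeriv_complexPlane] at hΔ
  simpa [iteratedFDeriv_two_apply, fderiv_clm_apply hd (differentiableAt_const _)] using hΔ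

theorem isOpen_UHP : IsOpen UHP := isOpen_lt continuous_const continuous_im

theorem isConnected_UHP : IsConnected UHP :=
  (convex_halfSpace_im_gt 0).isConnected ⟨I, by simp⟩

theorem UHP_subset_compl_ofReal_image (T : Set ℝ) : UHP ⊆ (ofReal '' T)ᶜ := by
  rintro w hw ⟨s, -, rfl⟩
  simp [UHP] at hw

theorem ball_subset_compl_ofReal_image_tsupport {ε : ℝ} {φ : ℝ → ℝ}
    (hφ : ∀ s ∈ Ioo (-ε) ε, φ s = 0) : Metric.ball 0 ε ⊆ (ofReal '' tsupport φ)ᶜ := by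
  rintro w hw ⟨s, hs, rfl⟩
  have hsupp : tsupport φ ⊆ (Ioo (-ε) ε)ᶜ :=
    closure_minimal (fun s hs hmem => hs (hφ s hmem)) isOpen_Ioo.isClosed_compl
  exact hsupp hs (by simpa [abs_lt] using hw)

theorem tendsto_ofReal_mul_exp_nhdsWithin_UHP {θ : ℝ} (hθ : θ ∈ Ioo 0 Real.pi) :
    Tendsto (fun r : ℝ => (r : ℂ) * exp (θ * I)) (𝓝[>] 0) (𝓝[UHP] 0) := by
  refine tendsto_nhdsWithin_iff.2 ⟨?_, eventually_nhdsWithin_of_forall fun r hr => ?_⟩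
  · exact ((continuous_ofReal.mul continuous_const).tendsto' 0 0 (by simp)).mono_left
      nhdsWithin_le_nhds
  · show 0 < ((r : ℂ) * exp (θ * I)).im
    rw [im_ofReal_mul, exp_ofReal_mul_I_im]
    exact mul_pos hr (Real.sin_pos_of_pos_of_lt_pi hθ.1 hθ.2)

theorem poissonIntegral_ofReal (φ : ℝ → ℝ) (s : ℝ) : poissonIntegral φ s = 0 := by
  simp [poissonIntegral]

theorem poissonIntegral_conj (φ : ℝ → ℝ) (w : ℂ) :
    poissonIntegral φ (conj w) = -poissonIntegral φ w := by
  simp [poissonIntegral, neg_div, integral_neg]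

theorem poissonIntegral_congr_ae {φ ψ : ℝ → ℝ} (h : φ =ᵐ[volume] ψ) :
    poissonIntegral φ = poissonIntegral ψ := by
  ext w
  unfold poissonIntegral
  congr 1
  exact integral_congr_ae (h.mono fun s hs => by simp only [hs])

theorem poissonKernel_eq {ξ η : ℝ} (hη : η ≠ 0) (s : ℝ) :
    η / ((ξ - s) ^ 2 + η ^ 2) = η⁻¹ * (1 + ((s - ξ) / η) ^ 2)⁻¹ := by
  field_simp
  ring

theorem integrable_poissonKernel (ξ : ℝ) {η : ℝ} (hη : 0 < η) :
    Integrable fun s : ℝ => η / ((ξ - s) ^ 2 + η ^ 2) := by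
  simp_rw [poissonKernel_eq hη.ne']
  exact ((integrable_inv_one_add_sq.comp_div hη.ne').comp_sub_right ξ).const_mul η⁻¹

theorem integral_poissonKernel (ξ : ℝ) {η : ℝ} (hη : 0 < η) :
    ∫ s : ℝ, η / ((ξ - s) ^ 2 + η ^ 2) = Real.pi := by
  simp_rw [poissonKernel_eq hη.ne']
  rw [integral_const_mul, integral_sub_right_eq_self (fun t => (1 + (t / η) ^ 2)⁻¹) ξ,
    Measure.integral_comp_div (fun t => (1 + t ^ 2)⁻¹) η, integral_univ_inv_one_add_sq,
    abs_of_pos hη, smul_eq_mul]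
  field_simp

theorem abs_poissonIntegral_le {φ : ℝ → ℝ} {M : ℝ} (hM : ∀ s, |φ s| ≤ M) {w : ℂ}
    (hw : w ∈ UHP) : |poissonIntegral φ w| ≤ M := by
  have hη : 0 < w.im := hw
  have hbound : ‖∫ s, w.im / ((w.re - s) ^ 2 + w.im ^ 2) * φ s‖ ≤ M * Real.pi := by
    refine (norm_integral_le_of_norm_le ((integrable_poissonKernel w.re hη).const_mul M)
      (Eventually.of_forall fun s => ?_)).trans_eq
      (by rw [integral_const_mul, integral_poissonKernel _ hη])
    rw [Real.norm_eq_abs, abs_mul, abs_of_nonneg (by positivity), mul_comm]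
    exact mul_le_mul_of_nonneg_right (hM s) (by positivity)
  rw [poissonIntegral, abs_mul, abs_of_pos (by positivity)]
  calc 1 / Real.pi * |∫ s, w.im / ((w.re - s) ^ 2 + w.im ^ 2) * φ s|
      ≤ 1 / Real.pi * (M * Real.pi) := by gcongr; exact hbound
    _ = M := by field_simp

/-- The subtracted term makes the kernel `O(1 / s²)`, so that it can be integrated against any
bounded function. -/
noncomputable def cauchyKernel (w : ℂ) (s : ℝ) : ℂ :=
  ((s : ℂ) - w)⁻¹ - (s : ℂ) / ((s : ℂ) ^ 2 + 1)

noncomputable def cauchyTransform (φ : ℝ → ℝ) (w : ℂ) : ℂ :=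
  ∫ s : ℝ, (φ s : ℂ) * cauchyKernel w s

theorem im_cauchyKernel (w : ℂ) (s : ℝ) :
    (cauchyKernel w s).im = w.im / ((w.re - s) ^ 2 + w.im ^ 2) := by
  have h : (s : ℂ) / ((s : ℂ) ^ 2 + 1) = ((s / (s ^ 2 + 1) : ℝ) : ℂ) := by push_cast; rfl
  rw [cauchyKernel, sub_im, h, ofReal_im, sub_zero, inv_im, normSq_apply]
  simp only [sub_re, sub_im, ofReal_re, ofReal_im]
  ring

theorem cauchyKernel_eq {w : ℂ} {s : ℝ} (h : (s : ℂ) - w ≠ 0) :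
    cauchyKernel w s = (1 + s * w) / (((s : ℂ) - w) * ((s : ℂ) ^ 2 + 1)) := by
  have : (s : ℂ) ^ 2 + 1 ≠ 0 := by exact_mod_cast (by positivity : s ^ 2 + 1 ≠ 0)
  rw [cauchyKernel]
  field_simp
  ring

theorem hasDerivAt_cauchyKernel {w : ℂ} {s : ℝ} (h : (s : ℂ) - w ≠ 0) :
    HasDerivAt (cauchyKernel · s) (((s : ℂ) - w) ^ 2)⁻¹ w := by
  simpa [cauchyKernel] using
    (((hasDerivAt_id w).const_sub (s : ℂ)).inv h).sub_const ((s : ℂ) / ((s : ℂ) ^ 2 + 1))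

theorem norm_ofReal_sq_add_one (s : ℝ) : ‖(s : ℂ) ^ 2 + 1‖ = 1 + s ^ 2 := by
  rw [← ofReal_pow, ← ofReal_one, ← ofReal_add, norm_real, Real.norm_of_nonneg (by positivity),
    add_comm]

section KernelBounds

variable {w : ℂ} {s δ R : ℝ} (hδ : 0 < δ) (hsw : δ ≤ ‖(s : ℂ) - w‖) (hw : ‖w‖ ≤ R)
include hδ hsw hw

theorem one_add_abs_le_mul_norm_sub : 1 + |s| ≤ (1 + (1 + R) / δ) * ‖(s : ℂ) - w‖ := by
  have hs : |s| ≤ ‖(s : ℂ) - w‖ + ‖w‖ := by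
    simpa [norm_real] using norm_le_norm_sub_add (s : ℂ) w
  have hR : 1 + R ≤ (1 + R) / δ * ‖(s : ℂ) - w‖ := by
    rw [div_mul_eq_mul_div, le_div_iff₀ hδ]
    exact mul_le_mul_of_nonneg_left hsw (by linarith [norm_nonneg w])
  linarith

theorem norm_cauchyKernel_le :
    ‖cauchyKernel w s‖ ≤ (1 + R) * (1 + (1 + R) / δ) * (1 + s ^ 2)⁻¹ := by
  have hd : 0 < ‖(s : ℂ) - w‖ := hδ.trans_le hsw
  have hnum : ‖1 + (s : ℂ) * w‖ ≤ (1 + R) * ((1 + (1 + R) / δ) * ‖(s : ℂ) - w‖) :=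
    calc ‖1 + (s : ℂ) * w‖ ≤ 1 + |s| * R := by
          grw [norm_add_le, norm_one, norm_mul, norm_real, Real.norm_eq_abs, hw]
      _ ≤ (1 + R) * (1 + |s|) := by nlinarith [abs_nonneg s, norm_nonneg w]
      _ ≤ _ := mul_le_mul_of_nonneg_left (one_add_abs_le_mul_norm_sub hδ hsw hw)
          (by linarith [norm_nonneg w])
  rw [cauchyKernel_eq (norm_pos_iff.1 hd), norm_div, norm_mul, norm_ofReal_sq_add_one,
    div_le_iff₀ (by positivity)]
  calc ‖1 + (s : ℂ) * w‖ ≤ _ := hnum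
    _ = _ := by field_simp

theorem norm_inv_sub_sq_le :
    ‖(((s : ℂ) - w) ^ 2)⁻¹‖ ≤ (1 + (1 + R) / δ) ^ 2 * (1 + s ^ 2)⁻¹ := by
  have hd : 0 < ‖(s : ℂ) - w‖ := hδ.trans_le hsw
  have hsq : 1 + s ^ 2 ≤ ((1 + (1 + R) / δ) * ‖(s : ℂ) - w‖) ^ 2 := by
    have := one_add_abs_le_mul_norm_sub hδ hsw hw
    nlinarith [abs_nonneg s, sq_abs s]
  rw [norm_inv, norm_pow, inv_le_iff_one_le_mul₀ (by positivity), ← div_eq_mul_inv,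
    div_mul_eq_mul_div, one_le_div (by positivity)]
  linarith [mul_pow (1 + (1 + R) / δ) ‖(s : ℂ) - w‖ 2]

end KernelBounds

theorem exists_pos_le_norm_sub_of_isClosed {T : Set ℝ} (hT : IsClosed T) {w₀ : ℂ}
    (hw₀ : w₀ ∉ ofReal '' T) :
    ∃ δ > 0, ∀ w ∈ Metric.ball w₀ δ, ∀ s ∈ T, δ ≤ ‖(s : ℂ) - w‖ := by
  have hopen : IsOpen (ofReal '' T)ᶜ :=
    (isometry_ofReal.isClosedEmbedding.isClosedMap T hT).isOpen_compl
  obtain ⟨r, hr, hball⟩ := Metric.isOpen_iff.1 hopen w₀ hw₀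
  refine ⟨r / 2, by positivity, fun w hw s hs => ?_⟩
  have hsr : r ≤ dist (s : ℂ) w₀ :=
    not_lt.1 fun h => hball (Metric.mem_ball.2 h) (mem_image_of_mem _ hs)
  rw [Metric.mem_ball] at hw
  linarith [dist_triangle (s : ℂ) w w₀, dist_eq_norm (s : ℂ) w]

section CauchyTransform

variable {φ : ℝ → ℝ} {M : ℝ}

theorem norm_ofReal_mul_le (hM : ∀ s, |φ s| ≤ M) {s : ℝ} {z : ℂ} {b : ℝ} (hb : 0 ≤ b)
    (hz : s ∈ tsupport φ → ‖z‖ ≤ b) : ‖(φ s : ℂ) * z‖ ≤ M * b := by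
  by_cases hs : s ∈ tsupport φ
  · rw [norm_mul, norm_real, Real.norm_eq_abs]
    exact mul_le_mul (hM s) (hz hs) (norm_nonneg z) ((abs_nonneg _).trans (hM s))
  · rw [image_eq_zero_of_notMem_tsupport hs, ofReal_zero, zero_mul, norm_zero]
    exact mul_nonneg ((abs_nonneg _).trans (hM s)) hb

theorem aestronglyMeasurable_ofReal_mul_cauchyKernel (hφ : Measurable φ) (w : ℂ) :
    AEStronglyMeasurable (fun s => (φ s : ℂ) * cauchyKernel w s) := by
  unfold cauchyKernel
  fun_prop

variable (hφ : Measurable φ) (hM : ∀ s, |φ s| ≤ M)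
include hφ hM

theorem integrable_ofReal_mul_cauchyKernel {w : ℂ} (hw : w ∉ ofReal '' tsupport φ) :
    Integrable fun s => (φ s : ℂ) * cauchyKernel w s := by
  obtain ⟨δ, hδ, hsep⟩ := exists_pos_le_norm_sub_of_isClosed (isClosed_tsupport φ) hw
  have hwδ : w ∈ Metric.ball w δ := Metric.mem_ball_self hδ
  refine ((integrable_inv_one_add_sq.const_mul ((1 + ‖w‖) * (1 + (1 + ‖w‖) / δ))).const_mul
    M).mono' (aestronglyMeasurable_ofReal_mul_cauchyKernel hφ w)
    (Eventually.of_forall fun s => ?_)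
  exact norm_ofReal_mul_le hM (by positivity)
    fun hs => norm_cauchyKernel_le hδ (hsep w hwδ s hs) le_rfl

theorem hasDerivAt_cauchyTransform {w₀ : ℂ} (hw₀ : w₀ ∉ ofReal '' tsupport φ) :
    HasDerivAt (cauchyTransform φ) (∫ s, (φ s : ℂ) * (((s : ℂ) - w₀) ^ 2)⁻¹) w₀ := by
  obtain ⟨δ, hδ, hsep⟩ := exists_pos_le_norm_sub_of_isClosed (isClosed_tsupport φ) hw₀
  have hR : ∀ w ∈ Metric.ball w₀ δ, ‖w‖ ≤ ‖w₀‖ + δ := fun w hw => by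
    linarith [norm_le_norm_sub_add w w₀, mem_ball_iff_norm.1 hw]
  refine (hasDerivAt_integral_of_dominated_loc_of_deriv_le
    (bound := fun s => M * ((1 + (1 + (‖w₀‖ + δ)) / δ) ^ 2 * (1 + s ^ 2)⁻¹))
    (Metric.ball_mem_nhds w₀ hδ)
    (Eventually.of_forall (aestronglyMeasurable_ofReal_mul_cauchyKernel hφ))
    (integrable_ofReal_mul_cauchyKernel hφ hM hw₀) (by fun_prop)
    (Eventually.of_forall fun s w hw => norm_ofReal_mul_le hM (by positivity)
      fun hs => norm_inv_sub_sq_le hδ (hsep w hw s hs) (hR w hw))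
    ((integrable_inv_one_add_sq.const_mul _).const_mul M)
    (Eventually.of_forall fun s w hw => ?_)).2
  by_cases hs : s ∈ tsupport φ
  · exact (hasDerivAt_cauchyKernel (norm_pos_iff.1 (hδ.trans_le (hsep w hw s hs)))).const_mul _
  · simpa [image_eq_zero_of_notMem_tsupport hs] using hasDerivAt_const w (0 : ℂ)

theorem differentiableOn_cauchyTransform :
    DifferentiableOn ℂ (cauchyTransform φ) (ofReal '' tsupport φ)ᶜ := fun _ hw =>
  (hasDerivAt_cauchyTransform hφ hM hw).differentiableAt.differentiableWithinAt

theorem poissonIntegral_eq_im_cauchyTransform {w : ℂ} (hw : w ∉ ofReal '' tsupport φ) :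
    poissonIntegral φ w = (cauchyTransform φ w / Real.pi).im := by
  rw [div_ofReal_im, cauchyTransform, ← imCLM_apply,
    ← imCLM.integral_comp_comm (integrable_ofReal_mul_cauchyKernel hφ hM hw), poissonIntegral]
  simp only [imCLM_apply, im_ofReal_mul, im_cauchyKernel, mul_comm (φ _)]
  ring

theorem harmonicOnNhd_poissonIntegral :
    HarmonicOnNhd (poissonIntegral φ) (ofReal '' tsupport φ)ᶜ := by
  have hopen : IsOpen (ofReal '' tsupport φ)ᶜ :=
    (isometry_ofReal.isClosedEmbedding.isClosedMap _ (isClosed_tsupport φ)).isOpen_compl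
  intro w hw
  rw [harmonicAt_congr_nhds (Filter.eventually_of_mem (hopen.mem_nhds hw)
    fun z hz => poissonIntegral_eq_im_cauchyTransform hφ hM hz)]
  exact (((differentiableOn_cauchyTransform hφ hM).div_const _).analyticAt
    (hopen.mem_nhds hw)).harmonicAt_im

end CauchyTransform

theorem exists_im_eq_im_add_const_of_re_eq {U : Set ℂ} (hU : IsOpen U) (hUc : IsConnected U)
    {f g : ℂ → ℂ} (hf : DifferentiableOn ℂ f U) (hg : DifferentiableOn ℂ g U)
    (hre : ∀ w ∈ U, (f w).re = (g w).re) : ∃ c : ℝ, ∀ w ∈ U, (f w).im = (g w).im + c := by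
  obtain ⟨c, hc⟩ := ((hf.sub hg).analyticOnNhd hU).eq_re_add_const_mul_I_of_re_eq_const (c₀ := 0)
    (fun w hw => by simp [hre w hw]) hU hUc
  refine ⟨c, fun w hw => ?_⟩
  have := congrArg im (hc w hw)
  simp only [Pi.sub_apply, sub_im, add_im, ofReal_im, mul_im, ofReal_re, I_re, I_im] at this
  linarith

theorem exists_tendsto_im_of_re_eq {U : Set ℂ} (hU : IsOpen U) (hUc : IsConnected U)
    {f g : ℂ → ℂ} (hf : DifferentiableOn ℂ f U) (hg : DifferentiableOn ℂ g U)
    (hre : ∀ w ∈ U, (f w).re = (g w).re) {z : ℂ} (hgz : ContinuousAt g z) :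
    ∃ l : ℝ, Tendsto (fun w => (f w).im) (𝓝[U] z) (𝓝 l) := by
  obtain ⟨c, hc⟩ := exists_im_eq_im_add_const_of_re_eq hU hUc hf hg hre
  refine ⟨(g z).im + c, ?_⟩
  have hlim : Tendsto (fun w => (g w).im + c) (𝓝 z) (𝓝 ((g z).im + c)) :=
    (continuous_im.continuousAt.comp hgz).tendsto.add_const c
  exact (hlim.mono_left nhdsWithin_le_nhds).congr'
    (eventually_nhdsWithin_of_forall fun w hw => (hc w hw).symm)

theorem exists_tendsto_conjugate_poissonIntegral {φ : ℝ → ℝ} {M : ℝ} (hφ : Measurable φ)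
    (hM : ∀ s, |φ s| ≤ M) {v : ℂ → ℝ}
    (hv : DifferentiableOn ℂ (fun w => (poissonIntegral φ w : ℂ) + I * v w) UHP) {z : ℂ}
    (hz : z ∉ ofReal '' tsupport φ) : ∃ l : ℝ, Tendsto v (𝓝[UHP] z) (𝓝 l) := by
  have hUHP := UHP_subset_compl_ofReal_image (tsupport φ)
  -- `-I * (cauchyTransform φ / π)` is holomorphic with real part `poissonIntegral φ`
  obtain ⟨l, hl⟩ := exists_tendsto_im_of_re_eq isOpen_UHP isConnected_UHP hv
    (g := fun w => -I * (cauchyTransform φ w / Real.pi))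
    ((((differentiableOn_cauchyTransform hφ hM).div_const _).const_mul _).mono hUHP)
    (fun w hw => by simp [poissonIntegral_eq_im_cauchyTransform hφ hM (hUHP hw)])
    (((hasDerivAt_cauchyTransform hφ hM hz).continuousAt.div_const _).const_mul _)
  exact ⟨l, by simpa using hl⟩

/-- **Regular behavior of the Poisson integral of a boundary function vanishing near `0`.**
If `W : ℝ → ℝ` is bounded measurable with `W = 0` a.e. on `(-ε,ε)`, then its Poisson
integral `P_W` is bounded and harmonic on `ℍ`, extends continuously to `ℍ ∪ (-ε,ε)` with
boundary value `0` on `(-ε,ε)`, and extends further to a harmonic function `u` on the disk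
`{|w| < ε}` with `u(conj w) = -u(w)`; in particular any harmonic conjugate of `P_W` on `ℍ`
has a finite limit along each ray `r e^{iθ}`, `r ↓ 0`, for `θ ∈ (0,π)`. -/
theorem poisson_integral_vanishing_near_zero
    (ε : ℝ) (hε : 0 < ε) (W : ℝ → ℝ)
    (hmeas : Measurable W)
    (hbd : ∃ M : ℝ, ∀ s : ℝ, |W s| ≤ M)
    (hae : ∀ᵐ s ∂(volume.restrict (Set.Ioo (-ε) ε)), W s = 0) :
    HarmonicOn (poissonIntegral W) UHP ∧
    (∃ M : ℝ, ∀ w ∈ UHP, |poissonIntegral W w| ≤ M) ∧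
    (∃ F : ℂ → ℝ,
      ContinuousOn F (UHP ∪ (Complex.ofReal '' Set.Ioo (-ε) ε)) ∧
      Set.EqOn F (poissonIntegral W) UHP ∧
      ∀ s ∈ Set.Ioo (-ε) ε, F (s : ℂ) = 0) ∧
    (∃ u : ℂ → ℝ,
      HarmonicOn u (Metric.ball (0 : ℂ) ε) ∧
      Set.EqOn u (poissonIntegral W) (Metric.ball (0 : ℂ) ε ∩ UHP) ∧
      ∀ w ∈ Metric.ball (0 : ℂ) ε, u ((starRingEnd ℂ) w) = - u w) ∧
    (∀ v : ℂ → ℝ,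
      DifferentiableOn ℂ
        (fun w => (poissonIntegral W w : ℂ) + Complex.I * (v w : ℂ)) UHP →
      ∀ θ ∈ Set.Ioo 0 Real.pi, ∃ l : ℝ,
        Tendsto (fun r : ℝ => v ((r : ℂ) * Complex.exp ((θ : ℂ) * Complex.I)))
          (𝓝[>] 0) (𝓝 l)) := by
  obtain ⟨M, hM⟩ := hbd
  set V := (Ioo (-ε) ε)ᶜ.indicator W
  have hVM : ∀ s, |V s| ≤ M := fun s => (norm_indicator_le_norm_self W s).trans (hM s)
  have hVmeas : Measurable V := hmeas.indicator measurableSet_Ioo.compl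
  have hWV : poissonIntegral W = poissonIntegral V := poissonIntegral_congr_ae
    (indicator_ae_eq_of_restrict_compl_ae_eq_zero measurableSet_Ioo.compl
      (by rwa [compl_compl])).symm
  have hball : Metric.ball 0 ε ⊆ (ofReal '' tsupport V)ᶜ :=
    ball_subset_compl_ofReal_image_tsupport fun s hs =>
      indicator_of_notMem (notMem_compl_iff.2 hs) W
  have hUHP := UHP_subset_compl_ofReal_image (tsupport V)
  have hharm := harmonicOnNhd_poissonIntegral hVmeas hVM
  rw [hWV]
  refine ⟨(hharm.mono hUHP).harmonicOn, ⟨M, fun w hw => abs_poissonIntegral_le hVM hw⟩,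
    ⟨poissonIntegral V, hharm.continuousOn.mono ?_, eqOn_refl _ _,
      fun s _ => poissonIntegral_ofReal V s⟩,
    ⟨poissonIntegral V, (hharm.mono hball).harmonicOn, eqOn_refl _ _,
      fun w _ => poissonIntegral_conj V w⟩, fun v hv θ hθ => ?_⟩
  · rintro w (hw | ⟨s, hs, rfl⟩)
    · exact hUHP hw
    · exact hball (by simpa [abs_lt] using hs)
  · obtain ⟨l, hl⟩ := exists_tendsto_conjugate_poissonIntegral hVmeas hVM hv
      (hball (Metric.mem_ball_self hε))
    exact ⟨l, hl.comp (tendsto_ofReal_mul_exp_nhdsWithin_UHP hθ)⟩
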